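/- Let A and B be bounded linear operators on H, let φ be a sub-multiplicative Orlicz function, let f : (0,1) → [0,∞) be any function, and let t ∈ (0,1). Then φ( ber(A*B)² ) ≤ [1/(2(1+f(t)))]·φ(ber(A*B))·ber( φ(|A|²) + φ(|B|²) ) + [f(t)/(2(1+f(t)))]·( φ( ber(|B|²·|A|²) ) + (1/2)·ber( φ(|A|⁴) + φ(|B|⁴) ) ). -/

import Mathlib

open ContinuousLinearMap
open scoped InnerProductSpace

/-- The `t`-Berezin norm of `A` with respect to the family `k` of (normalized reproducing
kernel) vectors. -/
noncomputable def tber {E : Type*} [NormedAddCommGroup E] [InnerProductSpace ℂ E]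
    [CompleteSpace E] {ι : Type*} (k : ι → E) (t : ℝ) (A : E →L[ℂ] E) : ℝ :=
  ⨆ p : ι × ι, (t * ‖⟪A (k p.1), k p.2⟫_ℂ‖ + (1 - t) * ‖⟪adjoint A (k p.1), k p.2⟫_ℂ‖)

/-- The Berezin norm of `A` with respect to the family `k`. -/
noncomputable def berNorm {E : Type*} [NormedAddCommGroup E] [InnerProductSpace ℂ E]
    {ι : Type*} (k : ι → E) (A : E →L[ℂ] E) : ℝ :=
  ⨆ p : ι × ι, ‖⟪A (k p.1), k p.2⟫_ℂ‖

/-- The Berezin number of `A` with respect to the family `k`. -/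
noncomputable def berNum {E : Type*} [NormedAddCommGroup E] [InnerProductSpace ℂ E]
    {ι : Type*} (k : ι → E) (A : E →L[ℂ] E) : ℝ :=
  ⨆ l : ι, ‖⟪A (k l), k l⟫_ℂ‖

/-- The modulus `|A| = (A*A)^(1/2)` of an operator, via the continuous functional calculus. -/
noncomputable def absOp {H : Type*} [NormedAddCommGroup H] [InnerProductSpace ℂ H]
    [CompleteSpace H] (A : H →L[ℂ] H) : H →L[ℂ] H :=
  cfc Real.sqrt (adjoint A * A)

/-- Real powers of a (positive) operator via the continuous functional calculus. -/
noncomputable def rpowOp {H : Type*} [NormedAddCommGroup H] [InnerProductSpace ℂ H]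
    [CompleteSpace H] (A : H →L[ℂ] H) (r : ℝ) : H →L[ℂ] H :=
  cfc (fun x : ℝ => x ^ r) A

section Helpers

variable {H : Type*} [NormedAddCommGroup H] [InnerProductSpace ℂ H]

/-- Buzano's inequality. -/
lemma my_buzano {e : H} (he : ‖e‖ = 1) (a b : H) :
    2 * (‖⟪a, e⟫_ℂ‖ * ‖⟪e, b⟫_ℂ‖) ≤ ‖a‖ * ‖b‖ + ‖⟪a, b⟫_ℂ‖ := by
  set c : ℂ := ⟪e, a⟫_ℂ with hc
  set u : H := (2 * c) • e - a with hu
  have hee : ⟪e, e⟫_ℂ = 1 := by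
    rw [inner_self_eq_norm_sq_to_K, he]; norm_num
  have hae : ⟪a, e⟫_ℂ = starRingEnd ℂ c := by rw [hc, inner_conj_symm]
  have hub : ⟪u, b⟫_ℂ = 2 * starRingEnd ℂ c * ⟪e, b⟫_ℂ - ⟪a, b⟫_ℂ := by
    simp only [hu, inner_sub_left, inner_smul_left, map_mul, Complex.conj_ofNat]
    try ring
  have huu : ⟪u, u⟫_ℂ = ⟪a, a⟫_ℂ := by
    simp only [hu, inner_sub_left, inner_sub_right, inner_smul_left, inner_smul_right, hee, hae]
    simp only [← hc, map_mul, Complex.conj_ofNat, mul_one]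
    ring
  have hnu : ‖u‖ = ‖a‖ := by
    have h2 : ‖u‖ ^ 2 = ‖a‖ ^ 2 := by
      rw [← inner_self_eq_norm_sq (𝕜 := ℂ), ← inner_self_eq_norm_sq (𝕜 := ℂ), huu]
    have := congrArg Real.sqrt h2
    simpa [Real.sqrt_sq, norm_nonneg] using this
  have key : ‖(2 : ℂ) * starRingEnd ℂ c * ⟪e, b⟫_ℂ‖ ≤ ‖a‖ * ‖b‖ + ‖⟪a, b⟫_ℂ‖ := by
    have : (2 : ℂ) * starRingEnd ℂ c * ⟪e, b⟫_ℂ = ⟪u, b⟫_ℂ + ⟪a, b⟫_ℂ := by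
      rw [hub]; ring
    rw [this]
    calc ‖⟪u, b⟫_ℂ + ⟪a, b⟫_ℂ‖ ≤ ‖⟪u, b⟫_ℂ‖ + ‖⟪a, b⟫_ℂ‖ := norm_add_le _ _
      _ ≤ ‖u‖ * ‖b‖ + ‖⟪a, b⟫_ℂ‖ := by gcongr; exact norm_inner_le_norm u b
      _ = ‖a‖ * ‖b‖ + ‖⟪a, b⟫_ℂ‖ := by rw [hnu]
  calc 2 * (‖⟪a, e⟫_ℂ‖ * ‖⟪e, b⟫_ℂ‖) = ‖(2 : ℂ) * starRingEnd ℂ c * ⟪e, b⟫_ℂ‖ := by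
        rw [norm_mul, norm_mul]
        simp [hae, mul_assoc]
    _ ≤ ‖a‖ * ‖b‖ + ‖⟪a, b⟫_ℂ‖ := key

/-- A supporting line for a convex monotone function on `[0, ∞)`. -/
lemma my_support (φ : ℝ → ℝ) (hconv : ConvexOn ℝ (Set.Ici 0) φ)
    (hmono : MonotoneOn φ (Set.Ici 0)) {x₀ : ℝ} (hx₀ : 0 ≤ x₀) :
    ∃ a : ℝ, ∀ x, 0 ≤ x → φ x₀ + a * (x - x₀) ≤ φ x := by
  rcases eq_or_lt_of_le hx₀ with h | h
  · refine ⟨0, fun x hx => ?_⟩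
    have := hmono (Set.mem_Ici.mpr le_rfl) (Set.mem_Ici.mpr hx) hx
    simp only [← h] at *
    linarith
  · set Sset : Set ℝ := (fun y => (φ x₀ - φ y) / (x₀ - y)) '' Set.Ico 0 x₀ with hS
    have hne : Sset.Nonempty := ⟨_, ⟨0, ⟨le_rfl, h⟩, rfl⟩⟩
    have hbdd : BddAbove Sset := by
      refine ⟨φ (x₀ + 1) - φ x₀, fun s hs => ?_⟩
      obtain ⟨y, ⟨hy0, hyx⟩, rfl⟩ := hs
      have := hconv.slope_mono_adjacent (Set.mem_Ici.mpr hy0)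
        (Set.mem_Ici.mpr (by linarith : (0:ℝ) ≤ x₀ + 1)) hyx (by linarith)
      simpa using this
    refine ⟨sSup Sset, fun x hx => ?_⟩
    rcases lt_trichotomy x x₀ with hlt | heq | hgt
    · have hmem : (φ x₀ - φ x) / (x₀ - x) ∈ Sset := ⟨x, ⟨hx, hlt⟩, rfl⟩
      have h1 : (φ x₀ - φ x) / (x₀ - x) ≤ sSup Sset := le_csSup hbdd hmem
      rw [div_le_iff₀ (by linarith)] at h1
      nlinarith [h1]
    · subst heq; simp
    · have h1 : sSup Sset ≤ (φ x - φ x₀) / (x - x₀) := by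
        refine csSup_le hne fun s hs => ?_
        obtain ⟨y, ⟨hy0, hyx⟩, rfl⟩ := hs
        exact hconv.slope_mono_adjacent (Set.mem_Ici.mpr hy0) (Set.mem_Ici.mpr hx) hyx hgt
      rw [le_div_iff₀ (by linarith)] at h1
      nlinarith [h1]

variable [CompleteSpace H]

/-- Operator Jensen inequality via continuous functional calculus. -/
lemma my_jensen (φ : ℝ → ℝ) (hφc : ContinuousOn φ (Set.Ici 0))
    (hconv : ConvexOn ℝ (Set.Ici 0) φ) (hmono : MonotoneOn φ (Set.Ici 0))
    (T : H →L[ℂ] H) (hT : 0 ≤ T) {e : H} (he : ‖e‖ = 1) :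
    φ (Complex.re ⟪T e, e⟫_ℂ) ≤ Complex.re ⟪cfc φ T e, e⟫_ℂ := by
  have hpos := (ContinuousLinearMap.nonneg_iff_isPositive T).mp hT
  have hsa : IsSelfAdjoint T := hpos.isSelfAdjoint
  set x₀ : ℝ := Complex.re ⟪T e, e⟫_ℂ with hx₀def
  have hx₀ : 0 ≤ x₀ := hpos.re_inner_nonneg_left e
  obtain ⟨a, ha⟩ := my_support φ hconv hmono hx₀
  set c : ℝ := φ x₀ - a * x₀ with hcdef
  have hspec : spectrum ℝ T ⊆ Set.Ici 0 := fun x hx => spectrum_nonneg_of_nonneg hT hx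
  have hle : cfc (fun x : ℝ => a * x + c) T ≤ cfc φ T := by
    refine cfc_mono (fun x hx => ?_) (by fun_prop) (hφc.mono hspec)
    have := ha x (hspec hx)
    simp only [hcdef]; linarith
  have heq : cfc (fun x : ℝ => a * x + c) T = a • T + c • (1 : H →L[ℂ] H) := by
    rw [cfc_add (a := T) (fun x => a * x) (fun _ => c) (by fun_prop) (by fun_prop),
      cfc_const_mul_id a T hsa, cfc_const c T hsa, Algebra.algebraMap_eq_smul_one]
  rw [heq] at hle
  have h2 : (0 : H →L[ℂ] H) ≤ cfc φ T - (a • T + c • (1 : H →L[ℂ] H)) := sub_nonneg.mpr hle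
  have h3 := ((ContinuousLinearMap.nonneg_iff_isPositive _).mp h2).re_inner_nonneg_left e
  simp only [RCLike.re_to_complex] at h3
  have hee : ⟪(e : H), e⟫_ℂ = 1 := by
    rw [inner_self_eq_norm_sq_to_K, he]; norm_num
  have hinner : ⟪(cfc φ T - (a • T + c • (1 : H →L[ℂ] H))) e, e⟫_ℂ
      = ⟪cfc φ T e, e⟫_ℂ - ((a : ℂ) * ⟪T e, e⟫_ℂ + (c : ℂ)) := by
    simp only [ContinuousLinearMap.sub_apply, ContinuousLinearMap.add_apply,
      ContinuousLinearMap.smul_apply, ContinuousLinearMap.one_apply,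
      inner_sub_left, inner_add_left, RCLike.real_smul_eq_coe_smul (K := ℂ),
      inner_smul_left, RCLike.conj_ofReal, hee, mul_one]
    norm_cast
  rw [hinner] at h3
  simp only [Complex.sub_re, Complex.add_re, Complex.re_ofReal_mul, Complex.ofReal_re,
    ← hx₀def, hcdef] at h3
  linarith

/-- `|A|² = A*A`. -/
lemma my_sq_abs (A : H →L[ℂ] H) : absOp A ^ 2 = adjoint A * A := by
  have h : (0 : H →L[ℂ] H) ≤ adjoint A * A := by
    have := star_mul_self_nonneg A; rwa [star_eq_adjoint] at this
  rw [absOp, ← cfc_pow Real.sqrt 2 (adjoint A * A)]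
  rw [cfc_congr (g := id) fun x hx => by
    simpa using Real.sq_sqrt (spectrum_nonneg_of_nonneg h hx)]
  exact cfc_id ℝ _

lemma my_inner_self_real (T : H →L[ℂ] H) (hT : IsSelfAdjoint T) (x : H) :
    ⟪T x, x⟫_ℂ = ((Complex.re ⟪T x, x⟫_ℂ : ℝ) : ℂ) := by
  have h1 : ⟪T x, x⟫_ℂ = ⟪x, T x⟫_ℂ := by
    nth_rewrite 1 [← hT.adjoint_eq]
    exact adjoint_inner_left T x x
  have h2 := inner_conj_symm (𝕜 := ℂ) x (T x)
  rw [← h1] at h2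
  have him : (⟪T x, x⟫_ℂ).im = 0 := Complex.conj_eq_iff_im.mp h2
  exact Complex.ext (by simp) (by simp [him])

end Helpers

set_option maxHeartbeats 1600000 in
lemma my_key {H : Type*} [NormedAddCommGroup H] [InnerProductSpace ℂ H] [CompleteSpace H]
    {Ω : Type*} [Nonempty Ω] (k : Ω → H) (hk : ∀ l, ‖k l‖ = 1)
    (A B : H →L[ℂ] H)
    (φ : ℝ → ℝ) (hφc : ContinuousOn φ (Set.Ici 0)) (hφconv : ConvexOn ℝ (Set.Ici 0) φ)
    (hφmono : MonotoneOn φ (Set.Ici 0)) (hφnn : ∀ s, 0 ≤ s → 0 ≤ φ s)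
    (hφsub : ∀ x y, 0 ≤ x → 0 ≤ y → φ (x * y) ≤ φ x * φ y)
    (r : ℝ) (hr : 0 ≤ r) (l : Ω) :
    φ (‖⟪(adjoint A * B) (k l), k l⟫_ℂ‖ ^ 2) ≤
      1 / (2 * (1 + r)) * φ (berNum k (adjoint A * B)) *
        berNum k (cfc φ ((absOp A) ^ 2) + cfc φ ((absOp B) ^ 2)) +
      r / (2 * (1 + r)) *
        (φ (berNum k ((absOp B) ^ 2 * (absOp A) ^ 2)) +
          (1 / 2) * berNum k (cfc φ ((absOp A) ^ 4) + cfc φ ((absOp B) ^ 4))) := by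
  have hft1 : (0 : ℝ) < 1 + r := by linarith
  have hSA : absOp A ^ 2 = adjoint A * A := my_sq_abs A
  have hTB : absOp B ^ 2 = adjoint B * B := my_sq_abs B
  have hS0 : (0 : H →L[ℂ] H) ≤ absOp A ^ 2 := by
    rw [hSA]; have := star_mul_self_nonneg A; rwa [star_eq_adjoint] at this
  have hT0 : (0 : H →L[ℂ] H) ≤ absOp B ^ 2 := by
    rw [hTB]; have := star_mul_self_nonneg B; rwa [star_eq_adjoint] at this
  have hSsa : IsSelfAdjoint (absOp A ^ 2) :=
    ((ContinuousLinearMap.nonneg_iff_isPositive _).mp hS0).isSelfAdjoint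
  have hTsa : IsSelfAdjoint (absOp B ^ 2) :=
    ((ContinuousLinearMap.nonneg_iff_isPositive _).mp hT0).isSelfAdjoint
  have hS4 : absOp A ^ 4 = (absOp A ^ 2) ^ 2 := by rw [← pow_mul]
  have hT4 : absOp B ^ 4 = (absOp B ^ 2) ^ 2 := by rw [← pow_mul]
  have hS40 : (0 : H →L[ℂ] H) ≤ absOp A ^ 4 := by
    rw [hS4, pow_two]
    have := star_mul_self_nonneg (absOp A ^ 2); rwa [hSsa.star_eq] at this
  have hT40 : (0 : H →L[ℂ] H) ≤ absOp B ^ 4 := by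
    rw [hT4, pow_two]
    have := star_mul_self_nonneg (absOp B ^ 2); rwa [hTsa.star_eq] at this
  have hbdd : ∀ C : H →L[ℂ] H, BddAbove (Set.range fun l => ‖⟪C (k l), k l⟫_ℂ‖) := by
    intro C
    refine ⟨‖C‖, ?_⟩
    rintro _ ⟨l, rfl⟩
    calc ‖⟪C (k l), k l⟫_ℂ‖ ≤ ‖C (k l)‖ * ‖k l‖ := norm_inner_le_norm _ _
      _ ≤ ‖C‖ * ‖k l‖ * ‖k l‖ := by gcongr; exact le_opNorm C (k l)
      _ = ‖C‖ := by rw [hk l]; ring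
  have hleC : ∀ (C : H →L[ℂ] H) (l : Ω), ‖⟪C (k l), k l⟫_ℂ‖ ≤ berNum k C :=
    fun C l => le_ciSup (hbdd C) l
  have hberNN : ∀ C : H →L[ℂ] H, 0 ≤ berNum k C :=
    fun C => le_trans (norm_nonneg _) (hleC C (Classical.arbitrary Ω))
  have hmid : ∀ x y : ℝ, 0 ≤ x → 0 ≤ y → φ (1/2 * x + 1/2 * y) ≤ 1/2 * φ x + 1/2 * φ y := by
    intro x y hx hy
    have := hφconv.2 (Set.mem_Ici.mpr hx) (Set.mem_Ici.mpr hy)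
      (by norm_num : (0:ℝ) ≤ 1/2) (by norm_num : (0:ℝ) ≤ 1/2) (by norm_num)
    simpa [smul_eq_mul] using this
  set e : H := k l with he_def
  have he : ‖e‖ = 1 := hk l
  set u : ℝ := ‖⟪(adjoint A * B) e, e⟫_ℂ‖ with hu_def
  have hu0 : 0 ≤ u := norm_nonneg _
  set b : ℝ := berNum k (adjoint A * B) with hb_def
  have hub : u ≤ b := hleC (adjoint A * B) l
  have hb0 : 0 ≤ b := hu0.trans hub
  set p : ℝ := Complex.re ⟪(absOp A ^ 2) e, e⟫_ℂ with hp_def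
  set q : ℝ := Complex.re ⟪(absOp B ^ 2) e, e⟫_ℂ with hq_def
  have hp0 : 0 ≤ p := ((ContinuousLinearMap.nonneg_iff_isPositive _).mp hS0).re_inner_nonneg_left e
  have hq0 : 0 ≤ q := ((ContinuousLinearMap.nonneg_iff_isPositive _).mp hT0).re_inner_nonneg_left e
  have hpA : p = ‖A e‖ ^ 2 := by
    have h1 : ⟪(absOp A ^ 2) e, e⟫_ℂ = ⟪A e, A e⟫_ℂ := by
      rw [hSA, ContinuousLinearMap.mul_apply]
      exact adjoint_inner_left A e (A e)
    rw [hp_def, h1, inner_self_eq_norm_sq_to_K]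
    simp [← Complex.ofReal_pow]
  have hqB : q = ‖B e‖ ^ 2 := by
    have h1 : ⟪(absOp B ^ 2) e, e⟫_ℂ = ⟪B e, B e⟫_ℂ := by
      rw [hTB, ContinuousLinearMap.mul_apply]
      exact adjoint_inner_left B e (B e)
    rw [hq_def, h1, inner_self_eq_norm_sq_to_K]
    simp [← Complex.ofReal_pow]
  have h1 : u ≤ ‖A e‖ * ‖B e‖ := by
    have h2 : ⟪(adjoint A * B) e, e⟫_ℂ = ⟪B e, A e⟫_ℂ := by
      rw [ContinuousLinearMap.mul_apply]
      exact adjoint_inner_left A e (B e)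
    rw [hu_def, h2]
    exact (norm_inner_le_norm _ _).trans (by rw [mul_comm])
  have hpq : u ≤ (p + q) / 2 := by
    refine h1.trans ?_
    rw [hpA, hqB]
    nlinarith [sq_nonneg (‖A e‖ - ‖B e‖)]
  have hu2 : u ^ 2 ≤ u * ((p + q) / 2) := by
    rw [pow_two]
    exact mul_le_mul_of_nonneg_left hpq hu0
  have hu2pq : u ^ 2 ≤ p * q := by
    rw [hpA, hqB]
    nlinarith [h1, hu0, norm_nonneg (A e), norm_nonneg (B e)]
  -- Jensen applications
  have jp : φ p ≤ Complex.re ⟪cfc φ (absOp A ^ 2) e, e⟫_ℂ :=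
    my_jensen φ hφc hφconv hφmono _ hS0 he
  have jq : φ q ≤ Complex.re ⟪cfc φ (absOp B ^ 2) e, e⟫_ℂ :=
    my_jensen φ hφc hφconv hφmono _ hT0 he
  have jp4 : φ (Complex.re ⟪(absOp A ^ 4) e, e⟫_ℂ) ≤ Complex.re ⟪cfc φ (absOp A ^ 4) e, e⟫_ℂ :=
    my_jensen φ hφc hφconv hφmono _ hS40 he
  have jq4 : φ (Complex.re ⟪(absOp B ^ 4) e, e⟫_ℂ) ≤ Complex.re ⟪cfc φ (absOp B ^ 4) e, e⟫_ℂ :=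
    my_jensen φ hφc hφconv hφmono _ hT40 he
  have hS4e : Complex.re ⟪(absOp A ^ 4) e, e⟫_ℂ = ‖(absOp A ^ 2) e‖ ^ 2 := by
    have h2 : ⟪(absOp A ^ 4) e, e⟫_ℂ = ⟪(absOp A ^ 2) e, (absOp A ^ 2) e⟫_ℂ := by
      rw [hS4, pow_two, ContinuousLinearMap.mul_apply]
      nth_rewrite 1 [← hSsa.adjoint_eq]
      exact adjoint_inner_left _ _ _
    rw [h2, inner_self_eq_norm_sq_to_K]
    simp [← Complex.ofReal_pow]
  have hT4e : Complex.re ⟪(absOp B ^ 4) e, e⟫_ℂ = ‖(absOp B ^ 2) e‖ ^ 2 := by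
    have h2 : ⟪(absOp B ^ 4) e, e⟫_ℂ = ⟪(absOp B ^ 2) e, (absOp B ^ 2) e⟫_ℂ := by
      rw [hT4, pow_two, ContinuousLinearMap.mul_apply]
      nth_rewrite 1 [← hTsa.adjoint_eq]
      exact adjoint_inner_left _ _ _
    rw [h2, inner_self_eq_norm_sq_to_K]
    simp [← Complex.ofReal_pow]
  -- Buzano application
  have hpe : ‖⟪(absOp A ^ 2) e, e⟫_ℂ‖ = p := by
    rw [my_inner_self_real _ hSsa e, ← hp_def, Complex.norm_real]
    exact Real.norm_of_nonneg hp0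
  have hqe : ‖⟪e, (absOp B ^ 2) e⟫_ℂ‖ = q := by
    rw [norm_inner_symm, my_inner_self_real _ hTsa e, ← hq_def, Complex.norm_real]
    exact Real.norm_of_nonneg hq0
  have hST : ⟪((absOp B ^ 2) * (absOp A ^ 2)) e, e⟫_ℂ = ⟪(absOp A ^ 2) e, (absOp B ^ 2) e⟫_ℂ := by
    rw [ContinuousLinearMap.mul_apply]
    nth_rewrite 1 [← hTsa.adjoint_eq]
    exact adjoint_inner_left _ _ _
  have hbuz : 2 * (p * q) ≤ ‖(absOp A ^ 2) e‖ * ‖(absOp B ^ 2) e‖ +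
      ‖⟪((absOp B ^ 2) * (absOp A ^ 2)) e, e⟫_ℂ‖ := by
    have := my_buzano he ((absOp A ^ 2) e) ((absOp B ^ 2) e)
    rw [hpe, hqe, ← hST] at this
    linarith
  -- abbreviations for the three berNum constants
  set M1 : ℝ := berNum k (cfc φ ((absOp A) ^ 2) + cfc φ ((absOp B) ^ 2)) with hM1_def
  set M2 : ℝ := berNum k ((absOp B) ^ 2 * (absOp A) ^ 2) with hM2_def
  set M3 : ℝ := berNum k (cfc φ ((absOp A) ^ 4) + cfc φ ((absOp B) ^ 4)) with hM3_def
  have hM3nn : 0 ≤ M3 := hberNN _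
  -- first chain
  have hsum1 : Complex.re ⟪cfc φ (absOp A ^ 2) e, e⟫_ℂ +
      Complex.re ⟪cfc φ (absOp B ^ 2) e, e⟫_ℂ ≤ M1 := by
    have h2 : Complex.re ⟪(cfc φ ((absOp A) ^ 2) + cfc φ ((absOp B) ^ 2)) e, e⟫_ℂ
        = Complex.re ⟪cfc φ (absOp A ^ 2) e, e⟫_ℂ + Complex.re ⟪cfc φ (absOp B ^ 2) e, e⟫_ℂ := by
      rw [ContinuousLinearMap.add_apply, inner_add_left, Complex.add_re]
    rw [← h2]
    have h3 : Complex.re ⟪(cfc φ ((absOp A) ^ 2) + cfc φ ((absOp B) ^ 2)) e, e⟫_ℂ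
        ≤ ‖⟪(cfc φ ((absOp A) ^ 2) + cfc φ ((absOp B) ^ 2)) e, e⟫_ℂ‖ := by
      exact Complex.re_le_norm _
    exact h3.trans (hleC _ l)
  have c1 : φ (u ^ 2) ≤ φ b * (1/2 * M1) := by
    have s1 : φ (u ^ 2) ≤ φ (u * ((p + q) / 2)) :=
      hφmono (Set.mem_Ici.mpr (sq_nonneg u)) (Set.mem_Ici.mpr (mul_nonneg hu0 (by linarith))) hu2
    have s2 : φ (u * ((p + q) / 2)) ≤ φ u * φ ((p + q) / 2) :=
      hφsub u ((p + q) / 2) hu0 (by linarith)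
    have s3 : φ ((p + q) / 2) ≤ 1/2 * φ p + 1/2 * φ q := by
      have := hmid p q hp0 hq0
      have heq : (p + q) / 2 = 1/2 * p + 1/2 * q := by ring
      rw [heq]; exact this
    have s4 : 1/2 * φ p + 1/2 * φ q ≤ 1/2 * M1 := by
      have := add_le_add jp jq
      have := this.trans hsum1
      linarith
    have s5 : φ u ≤ φ b := hφmono (Set.mem_Ici.mpr hu0) (Set.mem_Ici.mpr hb0) hub
    calc φ (u ^ 2) ≤ φ u * φ ((p + q) / 2) := s1.trans s2
      _ ≤ φ b * (1/2 * M1) := by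
          exact mul_le_mul s5 (s3.trans s4) (hφnn _ (by linarith)) (hφnn _ hb0)
  -- second chain
  have hsum3 : Complex.re ⟪cfc φ (absOp A ^ 4) e, e⟫_ℂ +
      Complex.re ⟪cfc φ (absOp B ^ 4) e, e⟫_ℂ ≤ M3 := by
    have h2 : Complex.re ⟪(cfc φ ((absOp A) ^ 4) + cfc φ ((absOp B) ^ 4)) e, e⟫_ℂ
        = Complex.re ⟪cfc φ (absOp A ^ 4) e, e⟫_ℂ + Complex.re ⟪cfc φ (absOp B ^ 4) e, e⟫_ℂ := by
      rw [ContinuousLinearMap.add_apply, inner_add_left, Complex.add_re]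
    rw [← h2]
    have h3 : Complex.re ⟪(cfc φ ((absOp A) ^ 4) + cfc φ ((absOp B) ^ 4)) e, e⟫_ℂ
        ≤ ‖⟪(cfc φ ((absOp A) ^ 4) + cfc φ ((absOp B) ^ 4)) e, e⟫_ℂ‖ := by
      exact Complex.re_le_norm _
    exact h3.trans (hleC _ l)
  set v : ℝ := ‖⟪((absOp B ^ 2) * (absOp A ^ 2)) e, e⟫_ℂ‖ with hv_def
  have hv0 : 0 ≤ v := norm_nonneg _
  have hvM2 : v ≤ M2 := hleC _ l
  set w : ℝ := ‖(absOp A ^ 2) e‖ * ‖(absOp B ^ 2) e‖ with hw_def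
  have hw0 : 0 ≤ w := by positivity
  have cw : φ w ≤ 1/2 * M3 := by
    have s1 : w ≤ 1/2 * ‖(absOp A ^ 2) e‖ ^ 2 + 1/2 * ‖(absOp B ^ 2) e‖ ^ 2 := by
      rw [hw_def]
      nlinarith [sq_nonneg (‖(absOp A ^ 2) e‖ - ‖(absOp B ^ 2) e‖)]
    have s2 : φ w ≤ φ (1/2 * ‖(absOp A ^ 2) e‖ ^ 2 + 1/2 * ‖(absOp B ^ 2) e‖ ^ 2) :=
      hφmono (Set.mem_Ici.mpr hw0) (Set.mem_Ici.mpr (by positivity)) s1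
    have s3 := hmid (‖(absOp A ^ 2) e‖ ^ 2) (‖(absOp B ^ 2) e‖ ^ 2)
      (sq_nonneg _) (sq_nonneg _)
    have s4 : φ (‖(absOp A ^ 2) e‖ ^ 2) ≤ Complex.re ⟪cfc φ (absOp A ^ 4) e, e⟫_ℂ := by
      rw [← hS4e]; exact jp4
    have s5 : φ (‖(absOp B ^ 2) e‖ ^ 2) ≤ Complex.re ⟪cfc φ (absOp B ^ 4) e, e⟫_ℂ := by
      rw [← hT4e]; exact jq4
    have := s2.trans s3
    have hfin := hsum3
    linarith
  have c2 : φ (u ^ 2) ≤ 1/2 * φ M2 + 1/2 * (1/2 * M3) := by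
    have s1 : φ (u ^ 2) ≤ φ (p * q) :=
      hφmono (Set.mem_Ici.mpr (sq_nonneg u)) (Set.mem_Ici.mpr (mul_nonneg hp0 hq0)) hu2pq
    have s2 : p * q ≤ 1/2 * v + 1/2 * w := by
      rw [hv_def, hw_def]; linarith
    have s3 : φ (p * q) ≤ φ (1/2 * v + 1/2 * w) :=
      hφmono (Set.mem_Ici.mpr (mul_nonneg hp0 hq0)) (Set.mem_Ici.mpr (by linarith)) s2
    have s4 := hmid v w hv0 hw0
    have s5 : φ v ≤ φ M2 := hφmono (Set.mem_Ici.mpr hv0) (Set.mem_Ici.mpr (hberNN _)) hvM2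
    have := s1.trans (s3.trans s4)
    linarith
  -- combine
  have hne : (1 + r) ≠ 0 := ne_of_gt hft1
  have split : φ (u ^ 2) = 1 / (1 + r) * φ (u ^ 2) + r / (1 + r) * φ (u ^ 2) := by
    field_simp
  calc φ (u ^ 2) = 1 / (1 + r) * φ (u ^ 2) + r / (1 + r) * φ (u ^ 2) := split
    _ ≤ 1 / (1 + r) * (φ b * (1/2 * M1)) + r / (1 + r) * (1/2 * φ M2 + 1/2 * (1/2 * M3)) := by
        apply add_le_add
        · exact mul_le_mul_of_nonneg_left c1 (div_nonneg zero_le_one hft1.le)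
        · exact mul_le_mul_of_nonneg_left c2 (div_nonneg hr hft1.le)
    _ = 1 / (2 * (1 + r)) * φ b * M1 + r / (2 * (1 + r)) * (φ M2 + 1/2 * M3) := by
        field_simp [hne]

open Filter in
theorem stmt16 {H : Type*} [NormedAddCommGroup H] [InnerProductSpace ℂ H] [CompleteSpace H]
    {Ω : Type*} [Nonempty Ω] (k : Ω → H) (hk : ∀ l, ‖k l‖ = 1)
    (A B : H →L[ℂ] H)
    (φ : ℝ → ℝ) (hφc : ContinuousOn φ (Set.Ici 0)) (hφconv : ConvexOn ℝ (Set.Ici 0) φ)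
    (hφmono : MonotoneOn φ (Set.Ici 0)) (hφ0 : φ 0 = 0) (hφnn : ∀ s, 0 ≤ s → 0 ≤ φ s)
    (hφtop : Tendsto φ atTop atTop)
    (hφsub : ∀ x y, 0 ≤ x → 0 ≤ y → φ (x * y) ≤ φ x * φ y)
    (f : ℝ → ℝ) (hf : ∀ s ∈ Set.Ioo (0 : ℝ) 1, 0 ≤ f s)
    (t : ℝ) (ht : t ∈ Set.Ioo (0 : ℝ) 1) :
    φ (berNum k (adjoint A * B) ^ 2) ≤
      1 / (2 * (1 + f t)) * φ (berNum k (adjoint A * B)) *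
        berNum k (cfc φ ((absOp A) ^ 2) + cfc φ ((absOp B) ^ 2)) +
      f t / (2 * (1 + f t)) *
        (φ (berNum k ((absOp B) ^ 2 * (absOp A) ^ 2)) +
          (1 / 2) * berNum k (cfc φ ((absOp A) ^ 4) + cfc φ ((absOp B) ^ 4))) := by
  have hft : 0 ≤ f t := hf t ht
  have hft1 : (0 : ℝ) < 1 + f t := by linarith
  -- basic operators
  have hSA : absOp A ^ 2 = adjoint A * A := my_sq_abs A
  have hTB : absOp B ^ 2 = adjoint B * B := my_sq_abs B
  have hS0 : (0 : H →L[ℂ] H) ≤ absOp A ^ 2 := by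
    rw [hSA]; have := star_mul_self_nonneg A; rwa [star_eq_adjoint] at this
  have hT0 : (0 : H →L[ℂ] H) ≤ absOp B ^ 2 := by
    rw [hTB]; have := star_mul_self_nonneg B; rwa [star_eq_adjoint] at this
  have hSsa : IsSelfAdjoint (absOp A ^ 2) :=
    ((ContinuousLinearMap.nonneg_iff_isPositive _).mp hS0).isSelfAdjoint
  have hTsa : IsSelfAdjoint (absOp B ^ 2) :=
    ((ContinuousLinearMap.nonneg_iff_isPositive _).mp hT0).isSelfAdjoint
  have hS4 : absOp A ^ 4 = (absOp A ^ 2) ^ 2 := by rw [← pow_mul]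
  have hT4 : absOp B ^ 4 = (absOp B ^ 2) ^ 2 := by rw [← pow_mul]
  have hS40 : (0 : H →L[ℂ] H) ≤ absOp A ^ 4 := by
    rw [hS4, pow_two]
    have := star_mul_self_nonneg (absOp A ^ 2); rwa [hSsa.star_eq] at this
  have hT40 : (0 : H →L[ℂ] H) ≤ absOp B ^ 4 := by
    rw [hT4, pow_two]
    have := star_mul_self_nonneg (absOp B ^ 2); rwa [hTsa.star_eq] at this
  -- berNum basics
  have hbdd : ∀ C : H →L[ℂ] H, BddAbove (Set.range fun l => ‖⟪C (k l), k l⟫_ℂ‖) := by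
    intro C
    refine ⟨‖C‖, ?_⟩
    rintro _ ⟨l, rfl⟩
    calc ‖⟪C (k l), k l⟫_ℂ‖ ≤ ‖C (k l)‖ * ‖k l‖ := norm_inner_le_norm _ _
      _ ≤ ‖C‖ * ‖k l‖ * ‖k l‖ := by gcongr; exact le_opNorm C (k l)
      _ = ‖C‖ := by rw [hk l]; ring
  have hleC : ∀ (C : H →L[ℂ] H) (l : Ω), ‖⟪C (k l), k l⟫_ℂ‖ ≤ berNum k C :=
    fun C l => le_ciSup (hbdd C) l
  have hberNN : ∀ C : H →L[ℂ] H, 0 ≤ berNum k C :=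
    fun C => le_trans (norm_nonneg _) (hleC C (Classical.arbitrary Ω))
  -- convexity helper
  have hmid : ∀ x y : ℝ, 0 ≤ x → 0 ≤ y → φ (1/2 * x + 1/2 * y) ≤ 1/2 * φ x + 1/2 * φ y := by
    intro x y hx hy
    have := hφconv.2 (Set.mem_Ici.mpr hx) (Set.mem_Ici.mpr hy)
      (by norm_num : (0:ℝ) ≤ 1/2) (by norm_num : (0:ℝ) ≤ 1/2) (by norm_num)
    simpa [smul_eq_mul] using this
  -- key per-vector inequality
  have key := my_key k hk A B φ hφc hφconv hφmono hφnn hφsub (f t) hft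
  -- final assembly via continuity of φ ∘ sq on the supremum
  have hb0 : 0 ≤ berNum k (adjoint A * B) :=
    le_trans (norm_nonneg _) (hleC _ (Classical.arbitrary Ω))
  set Φ : ℝ → ℝ := fun x => φ ((max x 0) ^ 2) with hΦ_def
  have hΦc : Continuous Φ := by
    apply ContinuousOn.comp_continuous hφc (by fun_prop)
    intro x
    exact Set.mem_Ici.mpr (sq_nonneg _)
  have hΦm : Monotone Φ := by
    intro x y hxy
    exact hφmono (Set.mem_Ici.mpr (sq_nonneg _)) (Set.mem_Ici.mpr (sq_nonneg _))
      (pow_le_pow_left₀ (le_max_right x 0) (max_le_max hxy le_rfl) 2)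
  have hmap : Φ (berNum k (adjoint A * B)) =
      ⨆ l, Φ (‖⟪(adjoint A * B) (k l), k l⟫_ℂ‖) := by
    rw [berNum]
    exact Monotone.map_ciSup_of_continuousAt hΦc.continuousAt hΦm (hbdd _)
  have hstart : φ (berNum k (adjoint A * B) ^ 2) = Φ (berNum k (adjoint A * B)) := by
    simp [hΦ_def, max_eq_left hb0]
  rw [hstart, hmap]
  apply ciSup_le
  intro l
  have := key l
  simpa [hΦ_def, max_eq_left (norm_nonneg _)] using this
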